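/- Let c ≥ 2 and let (λ, μ) be a codimension-c decoration with k = ∑μⱼ and parts λ₁ ≥ … ≥ λ_b. Let p = (c-2)k + 1 - λ₁ - … - λ_c be the value of p for the smallest minimal link. Then 0 ≤ λ_c + p < μ₁. -/

import Mathlib

/-- Sort a list of integers in non-increasing order. -/
def rsort (l : List ℤ) : List ℤ := List.insertionSort (· ≥ ·) l

/-- Remove all non-positive parts (trailing zeros) from a partition. -/
def strip (l : List ℤ) : List ℤ := l.filter (fun x => 0 < x)

/-- The smallest minimal link of a codimension-`c` pair of partitions `(λ, μ)`:
choose the `c` largest parts of `λ` (padding with zeros if needed), shift them by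
`p = (c-2)k + 1 - (λ₁ + ⋯ + λ_c)` where `k = ∑ μⱼ`, merge with `μ` and re-sort;
the other partition becomes `(λ_{c+1}, …, λ_b)`. -/
def smlink (c : ℕ) (P : List ℤ × List ℤ) : List ℤ × List ℤ :=
  let p : ℤ := ((c : ℤ) - 2) * P.2.sum + 1 - (P.1.take c).sum
  (strip (rsort ((P.1.take c ++ List.replicate (c - P.1.length) 0).map (· + p) ++ P.2)),
   strip (P.1.drop c))

/-- The smallest minimal link of `P` produces nonnegative parts, i.e. `λ_c + p ≥ 0`. -/
def ValidLink (c : ℕ) (P : List ℤ × List ℤ) : Prop :=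
  0 ≤ P.1.getD (c - 1) 0 + (((c : ℤ) - 2) * P.2.sum + 1 - (P.1.take c).sum)

/-- A partition: a non-increasing list of positive integers. -/
def IsPartition (l : List ℤ) : Prop := l.Pairwise (· ≥ ·) ∧ ∀ x ∈ l, 0 < x

/-- A codimension-`c` decoration: a pair of partitions reachable to the complete
intersection pair `((1^c), (1))` by finitely many smallest minimal links, all of
whose intermediate links are valid (have nonnegative parts). -/
def IsDecoration (c : ℕ) (P : List ℤ × List ℤ) : Prop :=
  IsPartition P.1 ∧ IsPartition P.2 ∧
  ∃ n : ℕ, (∀ m < n, ValidLink c ((smlink c)^[m] P)) ∧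
    (smlink c)^[n] P = (List.replicate c 1, [1])

/-!
Each valid smallest minimal link multiplies the defect `∑λ - (c-1)∑μ - 1` by `1 - c`, and the
defect of `((1^c), (1))` vanishes; hence a decoration satisfies `∑λ = (c-1)k + 1`. Given this
identity, if `λ_c + p ≥ μ₁` the link merely puts the shifted block `λ_i + p` in front of `μ`, and
the next link has shift `-p` and undoes it, so `(λ, μ)` is a point of period 2 (for `μ = ∅` it is
the fixed point `((1), ∅)`). Its orbit cannot contain `((1^c), (1))`, which links to the fixed point
`((1), ∅)`. The bound `0 ≤ λ_c + p` is the validity of the first link.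
-/

def topParts (c : ℕ) (l : List ℤ) : List ℤ := l.take c ++ List.replicate (c - l.length) 0

def linkShift (c : ℕ) (P : List ℤ × List ℤ) : ℤ := ((c : ℤ) - 2) * P.2.sum + 1 - (P.1.take c).sum

def sumDefect (c : ℕ) (P : List ℤ × List ℤ) : ℤ := P.1.sum - ((c : ℤ) - 1) * P.2.sum - 1

lemma smlink_eq (c : ℕ) (P : List ℤ × List ℤ) :
    smlink c P =
      (strip (rsort ((topParts c P.1).map (· + linkShift c P) ++ P.2)), strip (P.1.drop c)) :=
  rfl

lemma validLink_iff {c : ℕ} {P : List ℤ × List ℤ} :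
    ValidLink c P ↔ 0 ≤ P.1.getD (c - 1) 0 + linkShift c P :=
  Iff.rfl

lemma strip_eq_self {l : List ℤ} (h : ∀ x ∈ l, 0 < x) : strip l = l :=
  List.filter_eq_self.2 (by simpa using h)

lemma sum_strip {l : List ℤ} (h : ∀ x ∈ l, 0 ≤ x) : (strip l).sum = l.sum := by
  induction l with
  | nil => rfl
  | cons a l ih =>
    simp only [List.forall_mem_cons] at h
    rcases h.1.lt_or_eq with ha | rfl
    · simp [strip, ha, ← ih h.2]
    · simp [strip, ← ih h.2]

lemma rsort_perm (l : List ℤ) : (rsort l).Perm l := List.perm_insertionSort _ l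

lemma pairwise_rsort (l : List ℤ) : (rsort l).Pairwise (· ≥ ·) := List.pairwise_insertionSort _ l

lemma IsPartition.strip_rsort_eq {l l' : List ℤ} (hl' : IsPartition l') (h : (strip l).Perm l') :
    strip (rsort l) = l' :=
  List.Perm.eq_of_pairwise' ((pairwise_rsort l).filter _) hl'.1 (((rsort_perm l).filter _).trans h)

lemma IsPartition.strip_rsort {l : List ℤ} (hl : IsPartition l) : strip (rsort l) = l :=
  hl.strip_rsort_eq (by rw [strip_eq_self hl.2])

lemma sum_map_add_const (l : List ℤ) (a : ℤ) : (l.map (· + a)).sum = l.sum + l.length * a := by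
  induction l with
  | nil => simp
  | cons x l ih =>
    simp only [List.map_cons, List.sum_cons, ih, List.length_cons, Nat.cast_succ]
    ring

lemma length_topParts (c : ℕ) (l : List ℤ) : (topParts c l).length = c := by
  simp only [topParts, List.length_append, List.length_take, List.length_replicate]
  omega

lemma sum_topParts (c : ℕ) (l : List ℤ) : (topParts c l).sum = (l.take c).sum := by
  simp [topParts]

lemma IsPartition.strip_topParts_append_drop {c : ℕ} {l : List ℤ} (hl : IsPartition l) :
    strip (topParts c l ++ l.drop c) = l := by
  have hzero : (List.replicate (c - l.length) (0 : ℤ)).filter (0 < ·) = [] := by simp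
  rw [topParts, List.append_assoc, strip, List.filter_append, List.filter_append, hzero,
    List.nil_append, ← List.filter_append, List.take_append_drop]
  exact strip_eq_self hl.2

lemma IsPartition.pairwise_topParts {c : ℕ} {l : List ℤ} (hl : IsPartition l) :
    (topParts c l).Pairwise (· ≥ ·) :=
  List.pairwise_append.2 ⟨hl.1.sublist (List.take_sublist c l),
    List.pairwise_replicate.2 (Or.inr le_rfl),
    fun x hx _ hy => (List.eq_of_mem_replicate hy).symm ▸ (hl.2 x (List.mem_of_mem_take hx)).le⟩

lemma IsPartition.getD_le_of_mem_topParts {c : ℕ} {l : List ℤ} (hl : IsPartition l) {x : ℤ}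
    (hx : x ∈ topParts c l) : l.getD (c - 1) 0 ≤ x := by
  rcases List.mem_append.1 hx with hx | hx
  · obtain ⟨i, hi, rfl⟩ := List.getElem_of_mem hx
    rw [List.getElem_take]
    simp only [List.length_take] at hi
    by_cases hcl : c - 1 < l.length
    · rw [List.getD_eq_getElem _ _ hcl]
      exact hl.1.sortedGE.getElem_ge_getElem_of_le (by omega)
    · rw [List.getD_eq_default _ _ (by omega)]
      exact (hl.2 _ (List.getElem_mem _)).le
  · have : c - l.length ≠ 0 := fun h => by simp [h] at hx
    rw [List.getD_eq_default _ _ (by omega), List.eq_of_mem_replicate hx]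

section Defect

variable {c : ℕ} {P : List ℤ × List ℤ}

lemma isPartition_strip {l : List ℤ} (hl : l.Pairwise (· ≥ ·)) : IsPartition (strip l) :=
  ⟨hl.filter _, fun _ hx => by simpa using List.of_mem_filter hx⟩

lemma isPartition_iterate_smlink (h1 : IsPartition P.1) (h2 : IsPartition P.2) :
    ∀ m, IsPartition ((smlink c)^[m] P).1 ∧ IsPartition ((smlink c)^[m] P).2
  | 0 => ⟨h1, h2⟩
  | m + 1 => by
    rw [Function.iterate_succ_apply']
    exact ⟨isPartition_strip (pairwise_rsort _),
      isPartition_strip ((isPartition_iterate_smlink h1 h2 m).1.1.sublist (List.drop_sublist _ _))⟩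

lemma sumDefect_smlink (h1 : IsPartition P.1) (h2 : IsPartition P.2) (hv : ValidLink c P) :
    sumDefect c (smlink c P) = (1 - c) * sumDefect c P := by
  have hnonneg : ∀ x ∈ rsort ((topParts c P.1).map (· + linkShift c P) ++ P.2), 0 ≤ x := by
    intro x hx
    rcases List.mem_append.1 ((rsort_perm _).mem_iff.1 hx) with hx | hx
    · obtain ⟨y, hy, rfl⟩ := List.mem_map.1 hx
      have := h1.getD_le_of_mem_topParts hy
      rw [validLink_iff] at hv
      omega
    · exact (h2.2 x hx).le
  have hfst : (smlink c P).1.sum = (P.1.take c).sum + c * linkShift c P + P.2.sum := by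
    rw [smlink_eq, sum_strip hnonneg, (rsort_perm _).sum_eq, List.sum_append,
      sum_map_add_const, sum_topParts, length_topParts]
  have hsnd : (smlink c P).2.sum = P.1.sum - (P.1.take c).sum := by
    rw [smlink_eq, strip_eq_self fun x hx => h1.2 x (List.mem_of_mem_drop hx),
      ← List.sum_take_add_sum_drop P.1 c]
    ring
  simp only [sumDefect, hfst, hsnd, linkShift]
  ring

lemma sumDefect_iterate_smlink (h1 : IsPartition P.1) (h2 : IsPartition P.2) :
    ∀ n, (∀ m < n, ValidLink c ((smlink c)^[m] P)) →
      sumDefect c ((smlink c)^[n] P) = (1 - c) ^ n * sumDefect c P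
  | 0, _ => by simp
  | n + 1, hv => by
    have hP := isPartition_iterate_smlink (c := c) h1 h2 n
    rw [Function.iterate_succ_apply', sumDefect_smlink hP.1 hP.2 (hv n n.lt_succ_self),
      sumDefect_iterate_smlink h1 h2 n fun m hm => hv m (hm.trans n.lt_succ_self), pow_succ]
    ring

lemma IsDecoration.sumDefect_eq_zero (hc : c ≠ 1) (h : IsDecoration c P) : sumDefect c P = 0 := by
  obtain ⟨h1, h2, n, hv, hn⟩ := h
  have hCI : sumDefect c (List.replicate c 1, [1]) = 0 := by simp [sumDefect]
  rw [← hn, sumDefect_iterate_smlink h1 h2 n hv] at hCI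
  have : (1 - c : ℤ) ≠ 0 := by omega
  exact (mul_eq_zero.1 hCI).resolve_left (pow_ne_zero n this)

end Defect

section Involution

variable {c : ℕ} {P : List ℤ × List ℤ}

lemma IsPartition.le_getD_zero {l : List ℤ} (hl : IsPartition l) {y : ℤ} (hy : y ∈ l) :
    y ≤ l.getD 0 0 := by
  obtain _ | ⟨a, t⟩ := l
  · cases hy
  · rcases List.mem_cons.1 hy with rfl | hy
    · exact le_rfl
    · exact List.rel_of_pairwise_cons hl.1 hy

lemma topParts_append_of_length_eq {A B : List ℤ} (hA : A.length = c) :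
    topParts c (A ++ B) = A := by
  simp [topParts, ← hA]

lemma smlink_eq_of_le (h1 : IsPartition P.1) (h2 : IsPartition P.2)
    (hle : P.2.getD 0 0 ≤ P.1.getD (c - 1) 0 + linkShift c P)
    (hpos : 0 < P.1.getD (c - 1) 0 + linkShift c P) :
    smlink c P = ((topParts c P.1).map (· + linkShift c P) ++ P.2, P.1.drop c) := by
  have hA : ∀ x ∈ (topParts c P.1).map (· + linkShift c P),
      P.1.getD (c - 1) 0 + linkShift c P ≤ x := by
    intro x hx
    obtain ⟨y, hy, rfl⟩ := List.mem_map.1 hx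
    simpa using h1.getD_le_of_mem_topParts hy
  have hpart : IsPartition ((topParts c P.1).map (· + linkShift c P) ++ P.2) := by
    refine ⟨List.pairwise_append.2 ⟨h1.pairwise_topParts.map _ fun a b h => ?_, h2.1,
      fun x hx y hy => (h2.le_getD_zero hy).trans (hle.trans (hA x hx))⟩, fun x hx => ?_⟩
    · simpa using h
    · rcases List.mem_append.1 hx with hx | hx
      · exact hpos.trans_le (hA x hx)
      · exact h2.2 x hx
  rw [smlink_eq, hpart.strip_rsort, strip_eq_self fun x hx => h1.2 x (List.mem_of_mem_drop hx)]

lemma smlink_smlink_of_le (h1 : IsPartition P.1) (h2 : IsPartition P.2) (hd : sumDefect c P = 0)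
    (hle : P.2.getD 0 0 ≤ P.1.getD (c - 1) 0 + linkShift c P)
    (hpos : 0 < P.1.getD (c - 1) 0 + linkShift c P) :
    smlink c (smlink c P) = P := by
  set s := linkShift c P with hs
  set A := (topParts c P.1).map (· + s) with hAdef
  have hAlen : A.length = c := by rw [hAdef, List.length_map, length_topParts]
  have hAsum : A.sum = (P.1.take c).sum + c * s := by
    rw [hAdef, sum_map_add_const, sum_topParts, length_topParts]
  have hshift : linkShift c (A ++ P.2, P.1.drop c) = -s := by
    have hdrop := List.sum_take_add_sum_drop P.1 c
    simp only [sumDefect] at hd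
    simp only [linkShift, List.take_left' hAlen, hAsum, hs]
    linear_combination (c - 2 : ℤ) * (hd + hdrop)
  have hback : A.map (· + -s) = topParts c P.1 := by simp [hAdef, List.map_map, Function.comp_def]
  rw [smlink_eq_of_le h1 h2 hle hpos, smlink_eq, hshift, topParts_append_of_length_eq hAlen, hback,
    List.drop_left' hAlen, h1.strip_rsort_eq (by rw [h1.strip_topParts_append_drop]),
    strip_eq_self h2.2]

end Involution

section CompleteIntersection

variable {c : ℕ}

lemma IsPartition.eq_singleton_of_sum_eq_one {l : List ℤ} (hl : IsPartition l) (hs : l.sum = 1) :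
    l = [1] := by
  obtain _ | ⟨a, _ | ⟨b, t⟩⟩ := l
  · simp at hs
  · simpa using hs
  · have ha := hl.2 a (by simp)
    have hb := hl.2 b (by simp)
    have ht : 0 ≤ t.sum := List.sum_nonneg fun x hx => (hl.2 x (by simp [hx])).le
    simp only [List.sum_cons] at hs
    omega

lemma isPartition_one : IsPartition [1] := ⟨by simp, by simp⟩

lemma linkShift_ci (c : ℕ) : linkShift c (List.replicate c 1, [1]) = -1 := by
  simp only [linkShift, List.sum_singleton, List.take_replicate, min_self, List.sum_replicate,
    Int.nsmul_eq_mul]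
  ring

lemma smlink_ci (c : ℕ) : smlink c (List.replicate c 1, [1]) = ([1], []) := by
  rw [smlink_eq, linkShift_ci]
  refine Prod.ext (isPartition_one.strip_rsort_eq ?_) ?_ <;> simp [topParts, strip]

lemma smlink_one_nil (hc : 1 ≤ c) : smlink c ([1], []) = ([1], []) := by
  have htake : [(1 : ℤ)].take c = [1] := List.take_of_length_le hc
  have hdrop : [(1 : ℤ)].drop c = [] := List.drop_of_length_le hc
  have hshift : linkShift c ([1], []) = 0 := by simp [linkShift, htake]
  rw [smlink_eq, hshift]
  refine Prod.ext (isPartition_one.strip_rsort_eq ?_) ?_ <;> simp [topParts, strip, htake, hdrop]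

lemma validLink_ci (hc : 1 ≤ c) : ValidLink c (List.replicate c 1, [1]) := by
  rw [validLink_iff, linkShift_ci, List.getD_eq_getElem _ _ (by simp; omega)]
  simp

lemma not_isPeriodicPt_ci (hc : 1 ≤ c) :
    ¬ Function.IsPeriodicPt (smlink c) 2 (List.replicate c 1, [1]) := by
  intro h
  have : smlink c (smlink c (List.replicate c 1, [1])) = (List.replicate c 1, [1]) := h
  rw [smlink_ci, smlink_one_nil hc] at this
  simp at this

end CompleteIntersection

lemma isPeriodicPt_smlink_of_le {c : ℕ} (hc : 1 ≤ c) {P : List ℤ × List ℤ} (h1 : IsPartition P.1)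
    (h2 : IsPartition P.2) (hd : sumDefect c P = 0)
    (hle : P.2.getD 0 0 ≤ P.1.getD (c - 1) 0 + linkShift c P) :
    Function.IsPeriodicPt (smlink c) 2 P := by
  obtain ⟨l, _ | ⟨m, μ⟩⟩ := P
  · have hl : l = [1] := h1.eq_singleton_of_sum_eq_one (by simpa [sumDefect, sub_eq_zero] using hd)
    subst hl
    exact Function.IsFixedPt.isPeriodicPt (smlink_one_nil hc) 2
  · exact smlink_smlink_of_le h1 h2 hd hle ((h2.2 m (by simp)).trans_le hle)

/-- For a codimension-`c` decoration `(λ, μ)` with `k = ∑μⱼ` and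
`p = (c-2)k + 1 - λ₁ - ⋯ - λ_c` the shift of the smallest minimal link,
one has `0 ≤ λ_c + p < μ₁`. -/
theorem stmt5 (c : ℕ) (hc : 2 ≤ c) (P : List ℤ × List ℤ) (k p : ℤ)
    (hk : P.2.sum = k) (h : IsDecoration c P)
    (hp : p = ((c : ℤ) - 2) * k + 1 - (P.1.take c).sum) :
    0 ≤ P.1.getD (c - 1) 0 + p ∧ P.1.getD (c - 1) 0 + p < P.2.getD 0 0 := by
  subst hk hp
  have hd := h.sumDefect_eq_zero (by omega)
  obtain ⟨h1, h2, n, hv, hn⟩ := h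
  refine ⟨?_, lt_of_not_ge fun hle => ?_⟩
  · show ValidLink c P
    rcases n with _ | n
    · rw [Function.iterate_zero_apply] at hn
      rw [hn]
      exact validLink_ci (by omega)
    · exact hv 0 n.succ_pos
  · have hper := (isPeriodicPt_smlink_of_le (by omega) h1 h2 hd hle).apply_iterate n
    rw [hn] at hper
    exact not_isPeriodicPt_ci (by omega) hper
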